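/- Let S be an S-tree and let F_A(S) be the set of connected components of the forest obtained from S by deleting all edges between core vertices. Then every A ∈ F_A(S) is an S-tree, with Core(A) = Core(S) ∩ V(A) and Supp(A) = Supp(S) ∩ V(A). -/
import Mathlib


open scoped Classical

open SimpleGraph Matrix

noncomputable section

variable {V : Type*}

/-- The real adjacency matrix of a simple graph. -/
def adjMat [Fintype V] (G : SimpleGraph V) : Matrix V V ℝ :=
  Matrix.of fun a b => if G.Adj a b then (1 : ℝ) else 0

/-- Support of the null space of the adjacency matrix. -/
def suppSet [Fintype V] (G : SimpleGraph V) : Set V :=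
  {v | ∃ x : V → ℝ, adjMat G *ᵥ x = 0 ∧ x v ≠ 0}

/-- Core: the set of neighbors of supported vertices. -/
def coreSet [Fintype V] (G : SimpleGraph V) : Set V :=
  {v | ∃ u ∈ suppSet G, G.Adj u v}

/-- An S-tree: a tree in which the closed neighborhood of the support is everything. -/
def IsSTree [Fintype V] (G : SimpleGraph V) : Prop :=
  G.IsTree ∧ suppSet G ∪ coreSet G = Set.univ

/-- Nullity of a graph: dimension of the kernel of its adjacency matrix. -/
def nullity [Fintype V] (G : SimpleGraph V) : ℕ :=
  Module.finrank ℝ (LinearMap.ker (adjMat G).mulVecLin)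

/-- Rank of a graph: rank of its adjacency matrix. -/
def rankA [Fintype V] (G : SimpleGraph V) : ℕ :=
  (adjMat G).rank

/-- Matching number: the maximum cardinality of a matching. -/
def matchingNumber [Fintype V] (G : SimpleGraph V) : ℕ :=
  sSup {n | ∃ M : G.Subgraph, M.IsMatching ∧ M.edgeSet.ncard = n}

/-- The set of maximum matchings. -/
def maxMatchings [Fintype V] (G : SimpleGraph V) : Set G.Subgraph :=
  {M | M.IsMatching ∧ M.edgeSet.ncard = matchingNumber G}

/-- The number of maximum matchings. -/
def numMaxMatchings [Fintype V] (G : SimpleGraph V) : ℕ :=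
  (maxMatchings G).ncard

/-- Independence number. -/
def indepNumber [Fintype V] (G : SimpleGraph V) : ℕ :=
  sSup {n | ∃ s : Set V, (∀ a ∈ s, ∀ b ∈ s, ¬ G.Adj a b) ∧ s.ncard = n}

lemma ker_iff [Fintype V] (G : SimpleGraph V) (x : V → ℝ) :
    adjMat G *ᵥ x = 0 ↔ ∀ v, ∑ u : V, (if G.Adj v u then x u else 0) = 0 := by
  rw [funext_iff]
  refine forall_congr' fun v => ?_
  simp [adjMat, mulVec, dotProduct, ite_mul]

lemma sum_subtype_univ [Fintype V] (s : Set V) [Fintype s] (f : V → ℝ) (h : ∀ t, t ∉ s → f t = 0) :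
    ∑ t : s, f t.val = ∑ t : V, f t := by
  rw [← Finset.sum_subtype s.toFinset (fun x => Set.mem_toFinset) f]
  exact Finset.sum_subset (Finset.subset_univ _)
    (fun x _ hx => h x (by simpa [Set.mem_toFinset] using hx))

/-- Restriction of a kernel vector to an induced-type subgraph. -/
lemma ker_transfer [Fintype V] {s : Set V} [Fintype s] (G : SimpleGraph V) (G' : SimpleGraph s)
    (x : V → ℝ) (hx : adjMat G *ᵥ x = 0)
    (h1 : ∀ a b : s, (if G'.Adj a b then x b.val else 0) = (if G.Adj a.val b.val then x b.val else 0))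
    (h2 : ∀ (a : s) (b : V), b ∉ s → G.Adj a.val b → x b = 0) :
    adjMat G' *ᵥ (x ∘ Subtype.val) = 0 := by
  rw [ker_iff] at hx ⊢
  intro q
  calc ∑ u : s, (if G'.Adj q u then (x ∘ Subtype.val) u else 0)
      = ∑ u : s, (if G.Adj q.val u.val then x u.val else 0) := by
        refine Finset.sum_congr rfl fun u _ => h1 q u
    _ = ∑ u : V, (if G.Adj q.val u then x u else 0) := by
        refine sum_subtype_univ s (fun t => if G.Adj q.val t then x t else 0) fun t ht => ?_
        by_cases hA : G.Adj q.val t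
        · simp [hA, h2 q t ht hA]
        · simp [hA]
    _ = 0 := hx q.val

/-- Extension of a kernel vector by zero. -/
lemma ker_extend [Fintype V] {s : Set V} [Fintype s] (G : SimpleGraph V) (G' : SimpleGraph s)
    (y : s → ℝ) (hy : adjMat G' *ᵥ y = 0)
    (h1 : ∀ a b : s, (if G.Adj a.val b.val then y b else 0) = (if G'.Adj a b then y b else 0))
    (h2 : ∀ (a : V), a ∉ s → ∀ b : s, G.Adj a b.val → y b = 0)
    (Y : V → ℝ) (hYs : ∀ t : s, Y t.val = y t) (hY0 : ∀ t, t ∉ s → Y t = 0) :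
    adjMat G *ᵥ Y = 0 := by
  rw [ker_iff] at hy ⊢
  intro r
  have hzero : ∀ t, t ∉ s → (if G.Adj r t then Y t else 0) = 0 := by
    intro t ht
    by_cases hA : G.Adj r t <;> simp [hA, hY0 t ht]
  by_cases hr : r ∈ s
  · calc ∑ u : V, (if G.Adj r u then Y u else 0)
        = ∑ u : s, (if G.Adj r u.val then Y u.val else 0) := (sum_subtype_univ s (fun t => if G.Adj r t then Y t else 0) hzero).symm
      _ = ∑ u : s, (if G'.Adj ⟨r, hr⟩ u then y u else 0) := by
          refine Finset.sum_congr rfl fun u _ => ?_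
          rw [hYs u]; exact h1 ⟨r, hr⟩ u
      _ = 0 := hy ⟨r, hr⟩
  · calc ∑ u : V, (if G.Adj r u then Y u else 0)
        = ∑ u : s, (if G.Adj r u.val then Y u.val else 0) := (sum_subtype_univ s (fun t => if G.Adj r t then Y t else 0) hzero).symm
      _ = 0 := by
          refine Finset.sum_eq_zero fun u _ => ?_
          by_cases hA : G.Adj r u.val
          · rw [hYs u]; simp [hA, h2 r hr u hA]
          · simp [hA]

lemma exists_leaf [Fintype V] {G : SimpleGraph V} (hG : G.IsAcyclic) {a b : V}
    (hab : G.Adj a b) : ∃ ℓ p, G.Adj ℓ p ∧ ∀ z, G.Adj ℓ z → z = p := by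
  classical
  set L : Set ℕ := {n | ∃ (u v : V) (p : G.Walk u v), p.IsPath ∧ p.length = n} with hL
  have hne : 1 ∈ L := ⟨a, b, Walk.cons hab Walk.nil, by simp [hab.ne], by simp⟩
  have hbdd : BddAbove L := by
    refine ⟨Fintype.card V, ?_⟩
    rintro n ⟨u, v, p, hp, rfl⟩
    exact hp.length_lt.le
  have hNL : sSup L ∈ L := Nat.sSup_mem ⟨1, hne⟩ hbdd
  have hNmax : ∀ m ∈ L, m ≤ sSup L := fun m hm => le_csSup hbdd hm
  obtain ⟨u, v, p, hp, hlen⟩ := hNL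
  have h1 : 1 ≤ p.length := hlen ▸ hNmax 1 hne
  have hadj1 : G.Adj u (p.getVert 1) := by
    have := p.adj_getVert_succ (show 0 < p.length from h1)
    simpa [p.getVert_zero] using this
  refine ⟨u, p.getVert 1, hadj1, fun z hz => ?_⟩
  by_cases hzs : z ∈ p.support
  · have hTake := hp.takeUntil hzs
    have hPeq : (⟨Walk.cons hz Walk.nil, by simp [hz.ne]⟩ : G.Path u z)
        = ⟨p.takeUntil z hzs, hTake⟩ := hG.path_unique _ _
    have hwalk : p.takeUntil z hzs = Walk.cons hz Walk.nil :=
      (congrArg Subtype.val hPeq).symm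
    have hlen1 : (p.takeUntil z hzs).length = 1 := by rw [hwalk]; simp
    have hgv : p.getVert 1 = z := by
      conv_lhs => rw [← Walk.take_spec p hzs]
      rw [Walk.getVert_append]
      simp [hlen1]
    exact hgv.symm
  · exfalso
    have hcons : (Walk.cons hz.symm p).IsPath := hp.cons hzs
    have := hNmax (p.length + 1) ⟨z, v, Walk.cons hz.symm p, hcons, by simp⟩
    omega

lemma acyclic_of_hom {W : Type*} {G : SimpleGraph V} {G' : SimpleGraph W} (f : G →g G')
    (hf : Function.Injective f) (h : G'.IsAcyclic) : G.IsAcyclic :=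
  fun _ c hc => h (c.map f) (hc.map hf)

lemma acyclic_induce [Fintype V] {G : SimpleGraph V} (h : G.IsAcyclic) (s : Set V) :
    (G.induce s).IsAcyclic :=
  acyclic_of_hom (SimpleGraph.Embedding.induce s).toHom Subtype.val_injective h

universe u

lemma supp_indep_aux :
    ∀ (n : ℕ) {V : Type u} [Fintype V] (G : SimpleGraph V), Fintype.card V ≤ n →
      G.IsAcyclic → ∀ {u v : V}, G.Adj u v → u ∈ suppSet G → v ∈ suppSet G → False := by
  intro n
  induction n with
  | zero =>
    intro V _ G hcard _ u v huv _ _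
    have : Fintype.card V = 0 := le_antisymm hcard (Nat.zero_le _)
    exact (Fintype.card_eq_zero_iff.mp this).elim u
  | succ n IH =>
    intro V _ G hcard hacyc u v huv hu hv
    obtain ⟨x, hxker, hxu⟩ := hu
    obtain ⟨y, hyker, hyv⟩ := hv
    obtain ⟨ℓ, pv, hlp, hleaf⟩ := exists_leaf hacyc huv
    have vanish : ∀ z : V → ℝ, adjMat G *ᵥ z = 0 → z pv = 0 := by
      intro z hz
      have h := (ker_iff G z).1 hz ℓ
      have hsum : ∑ u : V, (if G.Adj ℓ u then z u else 0) = z pv := by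
        rw [Finset.sum_eq_single pv]
        · simp [hlp]
        · intro b _ hb
          by_cases hAb : G.Adj ℓ b
          · exact absurd (hleaf b hAb) hb
          · simp [hAb]
        · simp
      rw [hsum] at h
      exact h
    have hpv_nsupp : pv ∉ suppSet G := fun ⟨z, hz, hzpv⟩ => hzpv (vanish z hz)
    have hu_ne_pv : u ≠ pv := fun h => hpv_nsupp (h ▸ ⟨x, hxker, hxu⟩)
    have hv_ne_pv : v ≠ pv := fun h => hpv_nsupp (h ▸ ⟨y, hyker, hyv⟩)
    have hu_ne_l : u ≠ ℓ := fun h => hv_ne_pv (hleaf v (h ▸ huv))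
    have hv_ne_l : v ≠ ℓ := fun h => hu_ne_pv (hleaf u (h ▸ huv.symm))
    set s : Set V := ({ℓ, pv} : Set V)ᶜ with hs
    have hus : u ∈ s := by simp [hs, hu_ne_l, hu_ne_pv]
    have hvs : v ∈ s := by simp [hs, hv_ne_l, hv_ne_pv]
    have key : ∀ z : V → ℝ, adjMat G *ᵥ z = 0 →
        adjMat (G.induce s) *ᵥ (z ∘ Subtype.val) = 0 := by
      intro z hz
      refine ker_transfer G (G.induce s) z hz (fun a b => ?_) (fun a b hb hAb => ?_)
      · exact if_congr Iff.rfl rfl rfl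
      · have hb2 : b = ℓ ∨ b = pv := by
          by_cases h : b = ℓ
          · exact Or.inl h
          · exact Or.inr ((by simpa [hs] using hb : ¬b = ℓ → b = pv) h)
        rcases hb2 with rfl | rfl
        · have := hleaf a.val hAb.symm
          exact absurd a.property (by simp [hs, this])
        · exact vanish z hz
    have hcard' : Fintype.card s ≤ n := by
      have hlt : Fintype.card s < Fintype.card V :=
        Fintype.card_subtype_lt (x := ℓ) (by simp [hs])
      omega
    exact IH (G.induce s) hcard' (acyclic_induce hacyc s)
      (show (G.induce s).Adj ⟨u, hus⟩ ⟨v, hvs⟩ from huv)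
      ⟨x ∘ Subtype.val, key x hxker, hxu⟩ ⟨y ∘ Subtype.val, key y hyker, hyv⟩

lemma supp_indep {V : Type u} [Fintype V] {G : SimpleGraph V} (hacyc : G.IsAcyclic)
    {u v : V} (huv : G.Adj u v) (hu : u ∈ suppSet G) (hv : v ∈ suppSet G) : False :=
  supp_indep_aux (Fintype.card V) G le_rfl hacyc huv hu hv

lemma walk_induce {G : SimpleGraph V} {s : Set V} :
    ∀ {a b : V} (p : G.Walk a b) (ha : a ∈ s) (hb : b ∈ s),
      (∀ x ∈ p.support, x ∈ s) → (G.induce s).Reachable ⟨a, ha⟩ ⟨b, hb⟩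
  | _, _, Walk.nil, _, _, _ => Reachable.refl _
  | _, _, @Walk.cons _ _ a c b h q, ha, hb, hp =>
      Reachable.trans
        (SimpleGraph.Adj.reachable
          (show (G.induce s).Adj ⟨a, ha⟩ ⟨c, hp c (by simp)⟩ from h))
        (walk_induce q (hp c (by simp)) hb (fun x hx => hp x (by simp [hx])))

/-- Deleting all edges between core vertices of an S-tree `S` yields a forest each of whose
connected components `A` is an S-tree with `Core(A) = Core(S) ∩ V(A)` and
`Supp(A) = Supp(S) ∩ V(A)`. -/
theorem stmt14 [Fintype V] (S : SimpleGraph V) (hS : IsSTree S) :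
    -- `H` is `S` with every core-core edge deleted
    let H : SimpleGraph V :=
      SimpleGraph.fromRel (fun a b => S.Adj a b ∧ (a ∉ coreSet S ∨ b ∉ coreSet S))
    ∀ w : V,
      -- the connected component of `H` containing `w`, as an induced subgraph
      let A := H.induce {x | H.Reachable w x}
      IsSTree A ∧
        coreSet A = Subtype.val ⁻¹' coreSet S ∧
        suppSet A = Subtype.val ⁻¹' suppSet S := by
  intro H w A
  have hSa : S.IsAcyclic := hS.1.2
  have hHadj : ∀ a b, H.Adj a b ↔ S.Adj a b ∧ (a ∉ coreSet S ∨ b ∉ coreSet S) := by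
    intro a b
    constructor
    · intro h
      rw [SimpleGraph.fromRel_adj] at h
      obtain ⟨hne, h | h⟩ := h
      · exact h
      · exact ⟨h.1.symm, h.2.symm⟩
    · intro ⟨hadj, hcore⟩
      rw [SimpleGraph.fromRel_adj]
      exact ⟨hadj.ne, Or.inl ⟨hadj, hcore⟩⟩
  have core_not_supp : ∀ {b}, b ∈ coreSet S → b ∉ suppSet S := by
    rintro b ⟨u2, hu2, hadj⟩ hb
    exact supp_indep hSa hadj hu2 hb
  have ker_vanish : ∀ x : V → ℝ, adjMat S *ᵥ x = 0 → ∀ b ∈ coreSet S, x b = 0 := by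
    intro x hx b hb
    by_contra h
    exact core_not_supp hb ⟨x, hx, h⟩
  have hCclosed : ∀ {a b : V}, a ∈ {x | H.Reachable w x} → H.Adj a b →
      b ∈ {x | H.Reachable w x} :=
    fun ha h => Reachable.trans ha h.reachable
  have cross_core : ∀ a b : V, a ∈ {x | H.Reachable w x} → b ∉ {x | H.Reachable w x} →
      S.Adj a b → a ∈ coreSet S ∧ b ∈ coreSet S := by
    intro a b ha hb hadj
    have hnH : ¬ H.Adj a b := fun h => hb (hCclosed ha h)
    rw [hHadj] at hnH
    push_neg at hnH
    exact hnH hadj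
  have hAdjAH : ∀ a b : {x | H.Reachable w x}, A.Adj a b ↔ H.Adj a.val b.val :=
    fun a b => ⟨fun h => h, fun h => h⟩
  have restrict : ∀ x : V → ℝ, adjMat S *ᵥ x = 0 →
      adjMat A *ᵥ (x ∘ Subtype.val) = 0 := by
    intro x hx
    refine ker_transfer S A x hx (fun a b => ?_) (fun a b hb hAb => ?_)
    · by_cases hS' : S.Adj a.val b.val
      · by_cases hc : a.val ∈ coreSet S ∧ b.val ∈ coreSet S
        · have hxb : x b.val = 0 := ker_vanish x hx _ hc.2
          simp [hxb]
        · have hA : A.Adj a b := (hAdjAH a b).2 ((hHadj _ _).2 ⟨hS', by tauto⟩)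
          simp [hA, hS']
      · have hnA : ¬ A.Adj a b := fun h => hS' ((hHadj _ _).1 ((hAdjAH a b).1 h)).1
        simp [hnA, hS']
    · exact ker_vanish x hx b (cross_core a.val b a.property hb hAb).2
  have supp_restrict : ∀ q : {x | H.Reachable w x}, q.val ∈ suppSet S → q ∈ suppSet A := by
    rintro q ⟨x, hx, hxq⟩
    exact ⟨x ∘ Subtype.val, restrict x hx, hxq⟩
  let hAhom : A →g S := ⟨Subtype.val, fun {a b} h => ((hHadj _ _).1 ((hAdjAH a b).1 h)).1⟩
  have hAacyc : A.IsAcyclic :=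
    acyclic_of_hom hAhom (fun a b h => Subtype.ext (by exact h)) hSa
  have hAker_vanish : ∀ y : {x | H.Reachable w x} → ℝ, adjMat A *ᵥ y = 0 →
      ∀ q : {x | H.Reachable w x}, q ∈ coreSet A → y q = 0 := by
    intro y hy q hq
    by_contra h
    obtain ⟨t, ht, htq⟩ := hq
    exact supp_indep hAacyc htq ht ⟨y, hy, h⟩
  have core_lift : ∀ u : {x | H.Reachable w x}, u.val ∈ coreSet S → u ∈ coreSet A := by
    rintro u ⟨t, ht_supp, htu⟩
    have htc : t ∉ coreSet S := fun h => core_not_supp h ht_supp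
    have hH : H.Adj t u.val := (hHadj _ _).2 ⟨htu, Or.inl htc⟩
    have htC : t ∈ {x | H.Reachable w x} := hCclosed u.property hH.symm
    exact ⟨⟨t, htC⟩, supp_restrict ⟨t, htC⟩ ht_supp, (hAdjAH _ _).2 hH⟩
  have supp_extend : ∀ q : {x | H.Reachable w x}, q ∈ suppSet A → q.val ∈ suppSet S := by
    rintro q ⟨y, hy, hyq⟩
    have yvan : ∀ b : {x | H.Reachable w x}, b.val ∈ coreSet S → y b = 0 :=
      fun b hb => hAker_vanish y hy b (core_lift b hb)
    have hker : adjMat S *ᵥ (fun r => if h : r ∈ {x | H.Reachable w x} then y ⟨r, h⟩ else 0)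
        = 0 := by
      refine ker_extend S A y hy (fun a b => ?_) (fun a ha b hab => ?_) _
        (fun t => by simp) (fun t ht => by simp [ht])
      · by_cases hS' : S.Adj a.val b.val
        · by_cases hc : a.val ∈ coreSet S ∧ b.val ∈ coreSet S
          · have hyb : y b = 0 := yvan b hc.2
            simp [hyb]
          · have hA : A.Adj a b := (hAdjAH a b).2 ((hHadj _ _).2 ⟨hS', by tauto⟩)
            simp [hA, hS']
        · have hnA : ¬ A.Adj a b := fun h => hS' ((hHadj _ _).1 ((hAdjAH a b).1 h)).1
          simp [hnA, hS']
      · exact yvan b (cross_core b.val a b.property ha hab.symm).1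
    refine ⟨_, hker, ?_⟩
    simpa [q.property] using hyq
  have suppA_eq : suppSet A = Subtype.val ⁻¹' suppSet S :=
    Set.ext fun q => ⟨supp_extend q, supp_restrict q⟩
  have coreA_eq : coreSet A = Subtype.val ⁻¹' coreSet S := by
    refine Set.ext fun q => ⟨?_, core_lift q⟩
    rintro ⟨t, htA, hadjA⟩
    exact ⟨t.val, supp_extend t htA, ((hHadj _ _).1 ((hAdjAH t q).1 hadjA)).1⟩
  refine ⟨⟨⟨?_, hAacyc⟩, ?_⟩, coreA_eq, suppA_eq⟩
  · haveI : Nonempty ({x | H.Reachable w x} : Set V) := ⟨⟨w, Reachable.refl w⟩⟩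
    refine Connected.mk fun a b => ?_
    obtain ⟨p⟩ : H.Reachable a.val b.val := Reachable.trans (Reachable.symm a.property) b.property
    exact walk_induce p a.property b.property
      (fun x hx => Reachable.trans a.property ⟨p.takeUntil x hx⟩)
  · refine Set.eq_univ_of_forall fun q => ?_
    have hq : q.val ∈ suppSet S ∪ coreSet S := hS.2 ▸ Set.mem_univ q.val
    rcases hq with h | h
    · exact Or.inl (supp_restrict q h)
    · exact Or.inr (core_lift q h)
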